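/- Assume the Signal Model, the measurement model, and the modified-CS algorithm with support estimation threshold α = 8.79ε. Suppose: (a) some δ < (√2 − 1)/2 is an (S₀ + 3S_a)-restricted isometry bound for A; (b) r ≥ 8.79ε; (c) the initial support estimate satisfies N̂₀ ⊆ N₀, |N̂₀| ≤ S₀ and N₀ \ N̂₀ ⊆ 𝒮₀(2) (so |N₀ \ N̂₀| ≤ 2S_a). Then for every t ≥ 0: N̂_t ⊆ N_t, |N̂_t| ≤ S₀, N_t \ N̂_t ⊆ 𝒮_t(2) and hence |N_t \ N̂_t| ≤ 2S_a; and for every t ≥ 1: |T_t| ≤ S₀, |Δ_{e,t}| ≤ S_a, |Δ_t| ≤ 2S_a, and ‖x_t − x̂_t‖₂ ≤ 8.79ε. -/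
import Mathlib


open Finset

attribute [local instance] Classical.propDecidable

/-- Euclidean (ℓ2) norm of a finite real vector. -/
noncomputable def norm2 {k : ℕ} (v : Fin k → ℝ) : ℝ := Real.sqrt (∑ i, v i ^ 2)

/-- ℓ∞ norm (maximum absolute entry) of a finite real vector. -/
noncomputable def normInf {k : ℕ} (v : Fin k → ℝ) : ℝ := ⨆ i, |v i|

/-- Support of a vector, as a finset. -/
noncomputable def spt {k : ℕ} (v : Fin k → ℝ) : Finset (Fin k) :=
  Finset.univ.filter (fun i => v i ≠ 0)

/-- Restriction of a vector to the coordinates indexed by `T` (zero elsewhere). -/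
noncomputable def restr {k : ℕ} (T : Finset (Fin k)) (v : Fin k → ℝ) : Fin k → ℝ :=
  fun i => if i ∈ T then v i else 0

/-- `δ ∈ [0,1)` is an `S`-restricted isometry bound for `A`:
`(1-δ)‖z‖² ≤ ‖Az‖² ≤ (1+δ)‖z‖²` for every `z` with at most `S` nonzero entries. -/
def RIPBound {n m : ℕ} (A : Matrix (Fin n) (Fin m) ℝ) (S : ℕ) (δ : ℝ) : Prop :=
  0 ≤ δ ∧ δ < 1 ∧
    ∀ z : Fin m → ℝ, (spt z).card ≤ S →
      (1 - δ) * (∑ i, z i ^ 2) ≤ (∑ j, (A.mulVec z) j ^ 2) ∧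
      (∑ j, (A.mulVec z) j ^ 2) ≤ (1 + δ) * (∑ i, z i ^ 2)

/-- `θ ≥ 0` is an `(S,S')`-restricted orthogonality bound for `A`:
`|⟨Az, Az'⟩| ≤ θ‖z‖‖z'‖` for all `z, z'` with disjoint supports of cardinalities `≤ S, S'`. -/
def ROBound {n m : ℕ} (A : Matrix (Fin n) (Fin m) ℝ) (S S' : ℕ) (θ : ℝ) : Prop :=
  0 ≤ θ ∧
    ∀ z z' : Fin m → ℝ, Disjoint (spt z) (spt z') →
      (spt z).card ≤ S → (spt z').card ≤ S' →
      |∑ j, (A.mulVec z) j * (A.mulVec z') j| ≤ θ * norm2 z * norm2 z'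

/-- A modified-CS estimate with known part `T`: feasible and with minimal ℓ1 norm outside `T`
among all feasible vectors. -/
def ModCS {n m : ℕ} (A : Matrix (Fin n) (Fin m) ℝ) (y : Fin n → ℝ) (ε : ℝ)
    (T : Finset (Fin m)) (xhat : Fin m → ℝ) : Prop :=
  norm2 (fun j => y j - (A.mulVec xhat) j) ≤ ε ∧
    ∀ β : Fin m → ℝ, norm2 (fun j => y j - (A.mulVec β) j) ≤ ε →
      ∑ i ∈ Tᶜ, |xhat i| ≤ ∑ i ∈ Tᶜ, |β i|

/-- The LS estimate on `T` from `y`: supported on `T` and satisfying the normal equations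
`A_Tᵀ (y - A x̂) = 0` (equivalently `x̂_T = (A_Tᵀ A_T)⁻¹ A_Tᵀ y` when `A_T` has
full column rank). -/
def IsLS {n m : ℕ} (A : Matrix (Fin n) (Fin m) ℝ) (y : Fin n → ℝ)
    (T : Finset (Fin m)) (xhat : Fin m → ℝ) : Prop :=
  (∀ i, i ∉ T → xhat i = 0) ∧
    ∀ i ∈ T, (∑ j, A j i * (y j - (A.mulVec xhat) j)) = 0

/-- `C₁(δ) = 4√(1+δ)/(1-(√2+1)δ)`. -/
noncomputable def C1 (δ : ℝ) : ℝ := 4 * Real.sqrt (1 + δ) / (1 - (Real.sqrt 2 + 1) * δ)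

/-- `C₂(δ) = 2(1+(√2-1)δ)/(1-(√2+1)δ)`. -/
noncomputable def C2 (δ : ℝ) : ℝ := 2 * (1 + (Real.sqrt 2 - 1) * δ) / (1 - (Real.sqrt 2 + 1) * δ)

/-- The set `𝒮_t(j) = {i : 0 < |x_{t,i}| < j·r}` of small but nonzero elements. -/
noncomputable def Ssmall {m : ℕ} (x : ℕ → Fin m → ℝ) (r : ℝ) (t j : ℕ) : Finset (Fin m) :=
  Finset.univ.filter (fun i => 0 < |x t i| ∧ |x t i| < (j : ℝ) * r)

/-- Signal Model 1 of the paper: supports of size `S0` at all times, `Sa` additions (at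
magnitude `r`) and `Sa` removals at each time, with gradual magnitude increase up to
`M = d·r` and gradual decrease before removal. -/
structure SigModel (m S0 Sa d : ℕ) (r : ℝ) where
  /-- the signal sequence -/
  x : ℕ → Fin m → ℝ
  /-- `𝒜_t`: the set of indices newly added to the support at time `t` -/
  add : ℕ → Finset (Fin m)
  /-- `ℛ_t`: the set of indices removed from the support at time `t` -/
  rem : ℕ → Finset (Fin m)
  hr : 0 < r
  hm : 1 ≤ m
  hS0 : 1 ≤ S0
  hSa : 1 ≤ Sa
  hd : 2 ≤ d
  /-- at `t = 0` the support has size `S0` -/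
  init_card : (spt (x 0)).card = S0
  /-- at `t = 0`, exactly `2Sa` elements have magnitude `j·r` for each `j = 1,…,d-1` -/
  init_lvl : ∀ j : ℕ, 1 ≤ j → j + 1 ≤ d →
    (Finset.univ.filter (fun i => |x 0 i| = (j : ℝ) * r)).card = 2 * Sa
  /-- at `t = 0`, exactly `S0 - (2d-2)Sa` elements have magnitude `M = d·r` -/
  init_top : (Finset.univ.filter (fun i => |x 0 i| = (d : ℝ) * r)).card
      = S0 - (2 * d - 2) * Sa
  /-- at each `t > 0`, `Sa` new indices enter the support … -/
  add_card : ∀ t : ℕ, 0 < t → (add t).card = Sa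
  /-- … from outside the previous support … -/
  add_new : ∀ t : ℕ, 0 < t → ∀ i ∈ add t, x (t - 1) i = 0
  /-- … at magnitude `r` -/
  add_mag : ∀ t : ℕ, 0 < t → ∀ i ∈ add t, |x t i| = r
  /-- at each `t > 0`, `Sa` indices leave the support … -/
  rem_card : ∀ t : ℕ, 0 < t → (rem t).card = Sa
  /-- … which had magnitude `r` at `t-1` … -/
  rem_old : ∀ t : ℕ, 0 < t → ∀ i ∈ rem t, |x (t - 1) i| = r
  /-- … and become zero -/
  rem_zero : ∀ t : ℕ, 0 < t → ∀ i ∈ rem t, x t i = 0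
  /-- for each `2 ≤ j ≤ d`, exactly `Sa` coefficients increase from `(j-1)r` to `jr` -/
  inc_card : ∀ t : ℕ, 0 < t → ∀ j : ℕ, 2 ≤ j → j ≤ d →
    (Finset.univ.filter
      (fun i => |x t i| = (j : ℝ) * r ∧ |x (t - 1) i| = ((j : ℝ) - 1) * r)).card = Sa
  /-- for each `1 ≤ j ≤ d-1`, exactly `Sa` coefficients decrease from `(j+1)r` to `jr` -/
  dec_card : ∀ t : ℕ, 0 < t → ∀ j : ℕ, 1 ≤ j → j + 1 ≤ d →
    (Finset.univ.filter
      (fun i => |x t i| = (j : ℝ) * r ∧ |x (t - 1) i| = ((j : ℝ) + 1) * r)).card = Sa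
  /-- every nonzero magnitude equals `j·r` for some `1 ≤ j ≤ d` -/
  mag_level : ∀ t : ℕ, ∀ i, x t i ≠ 0 → ∃ j : ℕ, 1 ≤ j ∧ j ≤ d ∧ |x t i| = (j : ℝ) * r
  /-- coefficients not added and not removed keep their magnitude or change it by `±r` -/
  step : ∀ t : ℕ, 0 < t → ∀ i, i ∉ add t → i ∉ rem t →
    |x t i| = |x (t - 1) i| ∨ |x t i| = |x (t - 1) i| + r ∨ |x t i| = |x (t - 1) i| - r
  /-- the support evolves as `N_t = (N_{t-1} ∪ 𝒜_t) \ ℛ_t` -/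
  supp_step : ∀ t : ℕ, 0 < t → spt (x t) = (spt (x (t - 1)) ∪ add t) \ rem t
  /-- consequently `|N_t| = S0` for all `t` -/
  supp_card : ∀ t : ℕ, (spt (x t)).card = S0
  /-- and `|𝒮_t(j)| = 2(j-1)Sa` for all `1 ≤ j ≤ d` -/
  small_card : ∀ t : ℕ, ∀ j : ℕ, 1 ≤ j → j ≤ d →
    (Ssmall x r t j).card = 2 * (j - 1) * Sa

section auxnorm
variable {k : ℕ} (u v : Fin k → ℝ)

lemma norm2_nonneg : 0 ≤ norm2 v := Real.sqrt_nonneg _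

lemma sq_norm2 : norm2 v ^ 2 = ∑ i, v i ^ 2 := Real.sq_sqrt (by positivity)

lemma norm2_mono_sq {u v : Fin k → ℝ} (h : ∑ i, u i ^ 2 ≤ ∑ i, v i ^ 2) :
    norm2 u ≤ norm2 v := Real.sqrt_le_sqrt h

lemma norm2_le_of_sq_le {u : Fin k → ℝ} {c : ℝ} (h : ∑ i, u i ^ 2 ≤ c ^ 2)
    (hc : 0 ≤ c) : norm2 u ≤ c := by
  rw [norm2]
  calc Real.sqrt (∑ i, u i ^ 2) ≤ Real.sqrt (c ^ 2) := Real.sqrt_le_sqrt h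
  _ = c := Real.sqrt_sq hc

lemma abs_inner_le : |∑ i, u i * v i| ≤ norm2 u * norm2 v := by
  rw [abs_le]
  refine ⟨?_, Real.sum_mul_le_sqrt_mul_sqrt Finset.univ u v⟩
  have h := Real.sum_mul_le_sqrt_mul_sqrt Finset.univ (fun i => -(u i)) v
  have e1 : ∑ i, (-(u i)) * v i = -(∑ i, u i * v i) := by
    rw [← Finset.sum_neg_distrib]; exact Finset.sum_congr rfl (fun i _ => by ring)
  have e2 : ∑ i, (-(u i)) ^ 2 = ∑ i, u i ^ 2 :=
    Finset.sum_congr rfl (fun i _ => by ring)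
  rw [e1, e2] at h
  simp only [norm2]
  linarith [h]

lemma coord_le_norm2 (i : Fin k) : |v i| ≤ norm2 v := by
  rw [norm2, ← Real.sqrt_sq_eq_abs]
  apply Real.sqrt_le_sqrt
  exact Finset.single_le_sum (f := fun i => v i ^ 2) (fun j _ => sq_nonneg _) (mem_univ i)

lemma sum_sq_add (u v : Fin k → ℝ) :
    ∑ i, (u i + v i) ^ 2 = ∑ i, u i ^ 2 + 2 * (∑ i, u i * v i) + ∑ i, v i ^ 2 := by
  rw [Finset.mul_sum, ← Finset.sum_add_distrib, ← Finset.sum_add_distrib]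
  exact Finset.sum_congr rfl (fun i _ => by ring)

lemma norm2_add_le : norm2 (fun i => u i + v i) ≤ norm2 u + norm2 v := by
  apply norm2_le_of_sq_le _ (add_nonneg (norm2_nonneg u) (norm2_nonneg v))
  rw [sum_sq_add]
  have hc := (abs_le.1 (abs_inner_le u v)).2
  have h1 := sq_norm2 u
  have h2 := sq_norm2 v
  nlinarith [norm2_nonneg u, norm2_nonneg v]

end auxnorm

section auxrestr
variable {k : ℕ}

lemma mem_spt {v : Fin k → ℝ} {i : Fin k} : i ∈ spt v ↔ v i ≠ 0 := by
  rw [spt, Finset.mem_filter]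
  simp

lemma restr_sumsq (T : Finset (Fin k)) (v : Fin k → ℝ) :
    ∑ i, restr T v i ^ 2 = ∑ i ∈ T, v i ^ 2 := by
  rw [← Finset.sum_filter_add_sum_filter_not Finset.univ (fun i => i ∈ T)]
  have h1 : ∀ i ∈ Finset.univ.filter (fun i => i ∈ T), restr T v i ^ 2 = v i ^ 2 := by
    intro i hi; rw [Finset.mem_filter] at hi; simp [restr, hi.2]
  have h2 : ∀ i ∈ Finset.univ.filter (fun i => ¬ i ∈ T), restr T v i ^ 2 = 0 := by
    intro i hi; rw [Finset.mem_filter] at hi; simp [restr, hi.2]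
  rw [Finset.sum_congr rfl h1, Finset.sum_congr rfl h2, Finset.sum_const_zero, add_zero]
  congr 1
  ext i; simp

lemma spt_restr_subset (T : Finset (Fin k)) (v : Fin k → ℝ) : spt (restr T v) ⊆ T := by
  intro i hi
  rw [spt, Finset.mem_filter] at hi
  by_contra h
  exact hi.2 (by simp [restr, h])

lemma norm2_restr_mono {T T' : Finset (Fin k)} (h : T ⊆ T') (v : Fin k → ℝ) :
    norm2 (restr T v) ≤ norm2 (restr T' v) := by
  apply norm2_mono_sq
  rw [restr_sumsq, restr_sumsq]
  exact Finset.sum_le_sum_of_subset_of_nonneg h (fun i _ _ => sq_nonneg _)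

lemma l1_le_sqrt_card (T : Finset (Fin k)) (v : Fin k → ℝ) :
    ∑ i ∈ T, |v i| ≤ Real.sqrt T.card * norm2 (restr T v) := by
  have h := Real.sum_mul_le_sqrt_mul_sqrt T (fun i => (1:ℝ)) (fun i => |v i|)
  simp only [one_mul, one_pow, Finset.sum_const, nsmul_eq_mul, mul_one] at h
  have e : ∑ i ∈ T, |v i| ^ 2 = ∑ i, restr T v i ^ 2 := by
    rw [restr_sumsq]; exact Finset.sum_congr rfl (fun i _ => by rw [sq_abs])
  rw [norm2, ← e]
  exact h

lemma sum_sq_restr_add {T T' : Finset (Fin k)} (hd : Disjoint T T') (v : Fin k → ℝ) :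
    (norm2 (restr (T ∪ T') v))^2 = (norm2 (restr T v))^2 + (norm2 (restr T' v))^2 := by
  rw [sq_norm2, sq_norm2, sq_norm2, restr_sumsq, restr_sumsq, restr_sumsq]
  exact Finset.sum_union hd

end auxrestr

section auxspt
variable {k : ℕ}

lemma spt_subset_of_imp {u v : Fin k → ℝ} (h : ∀ i, u i ≠ 0 → v i ≠ 0) :
    spt u ⊆ spt v := by
  intro i hi
  rw [spt, Finset.mem_filter] at hi ⊢
  exact ⟨Finset.mem_univ i, h i hi.2⟩

lemma norm2_eq_zero_iff {v : Fin k → ℝ} (h : norm2 v = 0) : ∀ i, v i = 0 := by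
  intro i
  have := coord_le_norm2 v i
  rw [h] at this
  exact abs_eq_zero.1 (le_antisymm this (abs_nonneg _))

end auxspt

lemma mulVec_eq_sum {n m : ℕ} (A : Matrix (Fin n) (Fin m) ℝ) (v : Fin m → ℝ) (j : Fin n) :
    A.mulVec v j = ∑ i, A j i * v i := rfl

lemma mulVec_comb {n m : ℕ} (A : Matrix (Fin n) (Fin m) ℝ) (u v : Fin m → ℝ) (c : ℝ) (j : Fin n) :
    A.mulVec (fun i => u i + c * v i) j = A.mulVec u j + c * A.mulVec v j := by
  rw [mulVec_eq_sum, mulVec_eq_sum, mulVec_eq_sum, Finset.mul_sum, ← Finset.sum_add_distrib]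
  exact Finset.sum_congr rfl (fun i _ => by ring)

lemma mulVec_scale {n m : ℕ} (A : Matrix (Fin n) (Fin m) ℝ) (v : Fin m → ℝ) (c : ℝ) (j : Fin n) :
    A.mulVec (fun i => c * v i) j = c * A.mulVec v j := by
  rw [mulVec_eq_sum, mulVec_eq_sum, Finset.mul_sum]
  exact Finset.sum_congr rfl (fun i _ => by ring)

lemma theta_bound {n m : ℕ} {A : Matrix (Fin n) (Fin m) ℝ} {S : ℕ} {δ : ℝ}
    (hRIP : RIPBound A S δ) (z z' : Fin m → ℝ)
    (hdis : ∀ i, z i = 0 ∨ z' i = 0)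
    (hc : (spt z).card + (spt z').card ≤ S) :
    |∑ j, (A.mulVec z) j * (A.mulVec z') j| ≤ δ * norm2 z * norm2 z' := by
  obtain ⟨hδ0, hδ1, hrip⟩ := hRIP
  rcases eq_or_lt_of_le (norm2_nonneg z) with hz | hz
  · have hz0 : z = 0 := funext (norm2_eq_zero_iff hz.symm)
    rw [hz0, Matrix.mulVec_zero]
    simp only [Pi.zero_apply, zero_mul, Finset.sum_const_zero, abs_zero]
    exact mul_nonneg (mul_nonneg hδ0 (norm2_nonneg _)) (norm2_nonneg _)
  rcases eq_or_lt_of_le (norm2_nonneg z') with hz' | hz'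
  · have hz0 : z' = 0 := funext (norm2_eq_zero_iff hz'.symm)
    rw [hz0, Matrix.mulVec_zero]
    simp only [Pi.zero_apply, mul_zero, Finset.sum_const_zero, abs_zero]
    exact mul_nonneg (mul_nonneg hδ0 (norm2_nonneg _)) (norm2_nonneg _)
  set a := norm2 z with ha
  set b := norm2 z' with hb
  set u : Fin m → ℝ := fun i => a⁻¹ * z i with hu
  set u' : Fin m → ℝ := fun i => b⁻¹ * z' i with hu'
  have hza : ∀ i, z i = a * u i := by
    intro i; rw [hu]; field_simp
  have hzb : ∀ i, z' i = b * u' i := by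
    intro i; rw [hu']; field_simp
  have husq : ∑ i, u i ^ 2 = 1 := by
    have e : ∑ i, u i ^ 2 = a⁻¹ ^ 2 * ∑ i, z i ^ 2 := by
      rw [Finset.mul_sum]
      exact Finset.sum_congr rfl (fun i _ => by rw [hu]; ring)
    rw [e, ← sq_norm2 z, ← ha]
    field_simp
  have husq' : ∑ i, u' i ^ 2 = 1 := by
    have e : ∑ i, u' i ^ 2 = b⁻¹ ^ 2 * ∑ i, z' i ^ 2 := by
      rw [Finset.mul_sum]
      exact Finset.sum_congr rfl (fun i _ => by rw [hu']; ring)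
    rw [e, ← sq_norm2 z', ← hb]
    field_simp
  have hdisu : ∀ i, u i * u' i = 0 := by
    intro i
    rcases hdis i with h | h <;> simp [hu, hu', h]
  set w : ℝ → (Fin m → ℝ) := fun c => (fun i => u i + c * u' i) with hwdef
  have hcard : ∀ c : ℝ, (spt (w c)).card ≤ S := by
    intro c
    have h1 : spt (w c) ⊆ spt z ∪ spt z' := by
      intro i hi
      rw [mem_spt] at hi
      rw [Finset.mem_union, mem_spt, mem_spt]
      by_contra hcon
      push_neg at hcon
      have h2 : z i = 0 := hcon.1
      have h3 : z' i = 0 := hcon.2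
      apply hi
      rw [hwdef]
      simp [hu, hu', h2, h3]
    calc (spt (w c)).card ≤ (spt z ∪ spt z').card := Finset.card_le_card h1
    _ ≤ (spt z).card + (spt z').card := Finset.card_union_le _ _
    _ ≤ S := hc
  have h0 : ∑ i, u i * u' i = 0 := by
    rw [Finset.sum_congr rfl (fun i _ => hdisu i), Finset.sum_const_zero]
  have hsum : ∀ c : ℝ, ∑ i, (w c) i ^ 2 = 1 + c ^ 2 := by
    intro c
    have e : ∑ i, (w c) i ^ 2
        = ∑ i, u i ^ 2 + 2 * c * (∑ i, u i * u' i) + c ^ 2 * ∑ i, u' i ^ 2 := by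
      rw [Finset.mul_sum, Finset.mul_sum, ← Finset.sum_add_distrib, ← Finset.sum_add_distrib]
      exact Finset.sum_congr rfl (fun i _ => by rw [hwdef]; ring)
    rw [e, husq, husq', h0]
    ring
  set I := ∑ j, (A.mulVec u) j * (A.mulVec u') j with hI
  have hexp : ∀ c : ℝ, ∑ j, (A.mulVec (w c)) j ^ 2
      = ∑ j, (A.mulVec u) j ^ 2 + 2 * c * I + c ^ 2 * ∑ j, (A.mulVec u') j ^ 2 := by
    intro c
    rw [hI, Finset.mul_sum, Finset.mul_sum,
      ← Finset.sum_add_distrib, ← Finset.sum_add_distrib]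
    refine Finset.sum_congr rfl (fun j _ => ?_)
    rw [hwdef]
    rw [mulVec_comb A u u' c j]
    ring
  have hrip1 := hrip (w 1) (hcard 1)
  have hrip2 := hrip (w (-1)) (hcard (-1))
  rw [hsum 1, hexp 1] at hrip1
  rw [hsum (-1), hexp (-1)] at hrip2
  norm_num at hrip1 hrip2
  have habs : |I| ≤ δ := by
    rw [abs_le]
    constructor <;> nlinarith [hrip1.1, hrip1.2, hrip2.1, hrip2.2]
  have hfinal : ∑ j, (A.mulVec z) j * (A.mulVec z') j = a * b * I := by
    have e1 : A.mulVec z = A.mulVec (fun i => a * u i) := by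
      have : z = fun i => a * u i := funext hza
      rw [← this]
    have e2 : A.mulVec z' = A.mulVec (fun i => b * u' i) := by
      have : z' = fun i => b * u' i := funext hzb
      rw [← this]
    rw [e1, e2, hI, Finset.mul_sum]
    exact Finset.sum_congr rfl (fun j _ => by
      rw [mulVec_scale A u a j, mulVec_scale A u' b j]; ring)
  rw [hfinal, abs_mul, abs_mul, abs_of_pos hz, abs_of_pos hz']
  calc a * b * |I| ≤ a * b * δ := by
        apply mul_le_mul_of_nonneg_left habs (by positivity)
  _ = δ * a * b := by ring

lemma chunk_decomp {m' : ℕ} (h : Fin m' → ℝ) (C : Finset (Fin m')) (k : ℕ) (hk : 1 ≤ k) :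
    ∃ (B : ℕ) (K : ℕ → Finset (Fin m')),
      (∀ j, K j ⊆ C) ∧
      (∀ j j', j < j' → Disjoint (K j) (K j')) ∧
      (∀ j, (K j).card ≤ k) ∧
      ((Finset.range B).biUnion K = C) ∧
      ((∑ j ∈ Finset.range (B - 1), norm2 (restr (K (j+1)) h)) * Real.sqrt k
        ≤ ∑ i ∈ C, |h i|) := by
  classical
  set le : Fin m' → Fin m' → Bool := fun a b => decide (|h b| ≤ |h a|) with hle
  set L : List (Fin m') := C.toList.mergeSort le with hL
  have hperm : L.Perm C.toList := List.mergeSort_perm _ _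
  have hnodup : L.Nodup := hperm.nodup_iff.2 (Finset.nodup_toList C)
  have hmemL : ∀ i, i ∈ L ↔ i ∈ C := fun i => hperm.mem_iff.trans Finset.mem_toList
  have hsorted : L.Pairwise (fun a b => |h b| ≤ |h a|) := by
    have htr : ∀ a b c : Fin m', le a b = true → le b c = true → le a c = true := by
      intro a b c hab hbc
      simp only [hle, decide_eq_true_eq] at *
      linarith
    have hto : ∀ a b : Fin m', (le a b || le b a) = true := by
      intro a b
      simp only [hle, Bool.or_eq_true, decide_eq_true_eq]
      exact le_total _ _
    have hs := List.pairwise_mergeSort htr hto C.toList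
    rw [← hL] at hs
    exact hs.imp (fun {a b} hab => by simpa [hle, decide_eq_true_eq] using hab)
  set B : ℕ := L.length + 1 with hB
  set K : ℕ → Finset (Fin m') := fun j => ((L.drop (j*k)).take k).toFinset with hK
  have hKmem : ∀ j x, x ∈ K j ↔ x ∈ (L.drop (j*k)).take k := by
    intro j x; rw [hK]; exact List.mem_toFinset
  -- positions of elements of K j
  have hposmem : ∀ (q : ℕ) (x : Fin m'), x ∈ K q →
      ∃ p, q*k ≤ p ∧ p < q*k + k ∧ ∃ (hp : p < L.length), L[p] = x := by
    intro q x hx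
    rw [hKmem] at hx
    obtain ⟨p0, hp0, hget⟩ := List.getElem_of_mem hx
    have hlen : p0 < k := lt_of_lt_of_le hp0 (by
      rw [List.length_take]; exact min_le_left _ _)
    have hlen2 : p0 < (L.drop (q*k)).length := lt_of_lt_of_le hp0 (by
      rw [List.length_take]; exact min_le_right _ _)
    have hlen3 : q*k + p0 < L.length := by
      rw [List.length_drop] at hlen2; omega
    refine ⟨q*k + p0, Nat.le_add_right _ _, by omega, hlen3, ?_⟩
    rw [← hget, List.getElem_take, List.getElem_drop]
  -- membership of positions
  have hmempos : ∀ (p : ℕ) (hp : p < L.length), ∃ j, j < B ∧ L[p] ∈ K j := by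
    intro p hp
    obtain ⟨q, r, hrk, hpqr⟩ : ∃ q r, r < k ∧ p = q*k + r :=
      ⟨p/k, p%k, Nat.mod_lt _ (by omega), by
        have := Nat.div_add_mod' p k; omega⟩
    have hdl : r < (L.drop (q*k)).length := by rw [List.length_drop]; omega
    have htl : r < ((L.drop (q*k)).take k).length := by
      rw [List.length_take]; exact lt_min hrk hdl
    refine ⟨q, by
      have h1 : q ≤ q * k := Nat.le_mul_of_pos_right q (by omega)
      omega, ?_⟩
    rw [hKmem]
    have he : ((L.drop (q*k)).take k)[r] = L[p] := by
      rw [List.getElem_take, List.getElem_drop]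
      congr 1
      omega
    rw [← he]
    exact List.getElem_mem htl
  have hKsubC : ∀ j, K j ⊆ C := by
    intro j x hx
    rw [hKmem] at hx
    exact (hmemL x).1 (List.mem_of_mem_drop (List.mem_of_mem_take hx))
  have hKdisj : ∀ j j', j < j' → Disjoint (K j) (K j') := by
    intro j j' hjj
    rw [Finset.disjoint_left]
    intro x hx hx'
    obtain ⟨p, hp1, hp2, hp, hpe⟩ := hposmem j x hx
    obtain ⟨p', hp1', hp2', hp', hpe'⟩ := hposmem j' x hx'
    have hlt : p < p' := by
      have : j*k + k ≤ j'*k := by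
        calc j*k + k = (j+1)*k := by ring
        _ ≤ j'*k := Nat.mul_le_mul_right _ hjj
      omega
    have : p = p' := (hnodup.getElem_inj_iff).1 (hpe.trans hpe'.symm)
    omega
  have hKcard : ∀ j, (K j).card ≤ k := by
    intro j
    calc (K j).card ≤ ((L.drop (j*k)).take k).length := List.toFinset_card_le _
    _ ≤ k := by rw [List.length_take]; exact min_le_left _ _
  have hcover : (Finset.range B).biUnion K = C := by
    apply Finset.Subset.antisymm
    · intro x hx
      rw [Finset.mem_biUnion] at hx
      obtain ⟨j, _, hj⟩ := hx
      exact hKsubC j hj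
    · intro x hx
      obtain ⟨p, hp, hget⟩ := List.getElem_of_mem ((hmemL x).2 hx)
      obtain ⟨j, hjB, hjm⟩ := hmempos p hp
      rw [Finset.mem_biUnion]
      exact ⟨j, Finset.mem_range.2 hjB, by rw [← hget]; exact hjm⟩
  -- sorted comparison across consecutive blocks
  have hcmp : ∀ (j : ℕ) (x y : Fin m'), x ∈ K (j+1) → y ∈ K j → |h x| ≤ |h y| := by
    intro j x y hx hy
    obtain ⟨p', hp1', hp2', hp', hpe'⟩ := hposmem (j+1) x hx
    obtain ⟨p, hp1, hp2, hp, hpe⟩ := hposmem j y hy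
    have hlt : p < p' := by
      have h3 : (j+1)*k = j*k + k := Nat.succ_mul j k
      omega
    have := (List.pairwise_iff_getElem.1 hsorted) p p' hp hp' hlt
    rw [hpe, hpe'] at this
    exact this
  -- full blocks
  have hfull : ∀ j, (K (j+1)).Nonempty → (K j).card = k := by
    intro j ⟨x, hx⟩
    obtain ⟨p', hp1', hp2', hp', hpe'⟩ := hposmem (j+1) x hx
    have hlen : j*k + k ≤ L.length := by
      have : (j+1)*k = j*k + k := by ring
      omega
    have hnd : ((L.drop (j*k)).take k).Nodup :=
      ((List.take_sublist _ _).trans (List.drop_sublist _ _)).nodup hnodup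
    rw [hK]
    rw [List.toFinset_card_of_nodup hnd, List.length_take, List.length_drop]
    omega
  -- per-block norm bound
  have hblock : ∀ j, norm2 (restr (K (j+1)) h) * Real.sqrt k ≤ ∑ i ∈ K j, |h i| := by
    intro j
    have hS1 : (0:ℝ) ≤ ∑ i ∈ K j, |h i| := Finset.sum_nonneg (fun i _ => abs_nonneg _)
    rcases Finset.eq_empty_or_nonempty (K (j+1)) with hemp | hne
    · have : norm2 (restr (K (j+1)) h) = 0 := by
        rw [norm2]
        have : ∑ i, restr (K (j+1)) h i ^ 2 = 0 := by
          rw [restr_sumsq, hemp, Finset.sum_empty]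
        rw [this, Real.sqrt_zero]
      rw [this, zero_mul]
      exact hS1
    · set S1 := ∑ i ∈ K j, |h i| with hS1d
      have hfl := hfull j hne
      have hsk : (0:ℝ) < Real.sqrt k := Real.sqrt_pos.2 (by exact_mod_cast Nat.pos_of_ne_zero (by omega))
      have hxb : ∀ x ∈ K (j+1), |h x| * k ≤ S1 := by
        intro x hx
        have : ∀ y ∈ K j, |h x| ≤ |h y| := fun y hy => hcmp j x y hx hy
        calc |h x| * k = ∑ _y ∈ K j, |h x| := by
              rw [Finset.sum_const, hfl, nsmul_eq_mul, mul_comm]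
        _ ≤ S1 := Finset.sum_le_sum this
      have hsq : ∑ i, restr (K (j+1)) h i ^ 2 ≤ (S1 / Real.sqrt k)^2 := by
        rw [restr_sumsq]
        have hb : ∀ x ∈ K (j+1), h x ^ 2 ≤ (S1/k)^2 := by
          intro x hx
          have h1 : |h x| ≤ S1 / k := by
            rw [le_div_iff₀ (by exact_mod_cast Nat.pos_of_ne_zero (by omega))]
            exact hxb x hx
          calc h x ^ 2 = |h x|^2 := (sq_abs _).symm
          _ ≤ (S1/k)^2 := by
              apply sq_le_sq' _ h1
              calc -(S1/k) ≤ 0 := neg_nonpos_of_nonneg (div_nonneg hS1 (by positivity))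
              _ ≤ |h x| := abs_nonneg _
        calc ∑ x ∈ K (j+1), h x ^ 2 ≤ ∑ _x ∈ K (j+1), (S1/k)^2 :=
              Finset.sum_le_sum hb
        _ = (K (j+1)).card * (S1/k)^2 := by rw [Finset.sum_const, nsmul_eq_mul]
        _ ≤ k * (S1/k)^2 := by
              apply mul_le_mul_of_nonneg_right _ (by positivity)
              exact_mod_cast hKcard (j+1)
        _ = (S1 / Real.sqrt k)^2 := by
              rw [div_pow, div_pow, Real.sq_sqrt (by positivity : (0:ℝ) ≤ (k:ℝ))]
              field_simp
      have hn2 : norm2 (restr (K (j+1)) h) ≤ S1 / Real.sqrt k :=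
        norm2_le_of_sq_le hsq (by positivity)
      calc norm2 (restr (K (j+1)) h) * Real.sqrt k ≤ (S1 / Real.sqrt k) * Real.sqrt k :=
            mul_le_mul_of_nonneg_right hn2 (le_of_lt hsk)
      _ = S1 := div_mul_cancel₀ _ (ne_of_gt hsk)
  -- total bound
  refine ⟨B, K, hKsubC, hKdisj, hKcard, hcover, ?_⟩
  rw [Finset.sum_mul]
  calc ∑ j ∈ Finset.range (B-1), norm2 (restr (K (j+1)) h) * Real.sqrt k
      ≤ ∑ j ∈ Finset.range (B-1), ∑ i ∈ K j, |h i| :=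
        Finset.sum_le_sum (fun j _ => hblock j)
  _ = ∑ i ∈ (Finset.range (B-1)).biUnion K, |h i| := by
        rw [Finset.sum_biUnion]
        intro a ha b hb hab
        rcases lt_or_gt_of_ne hab with hlt | hgt
        · exact hKdisj a b hlt
        · exact (hKdisj b a hgt).symm
  _ ≤ ∑ i ∈ C, |h i| := by
        apply Finset.sum_le_sum_of_subset_of_nonneg
        · intro x hx
          rw [Finset.mem_biUnion] at hx
          obtain ⟨j, _, hj⟩ := hx
          exact hKsubC j hj
        · intro i _ _; exact abs_nonneg _

lemma sqrt_le_num {x c : ℝ} (hx : x ≤ c^2) (hc : 0 ≤ c) : Real.sqrt x ≤ c := by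
  calc Real.sqrt x ≤ Real.sqrt (c^2) := Real.sqrt_le_sqrt hx
  _ = c := Real.sqrt_sq hc

set_option maxHeartbeats 2000000 in
lemma modCS_error {n m : ℕ} {A : Matrix (Fin n) (Fin m) ℝ} {S : ℕ} {δ ε : ℝ}
    (hRIP : RIPBound A S δ) (hδ : δ ≤ 0.20711)
    (x : Fin m → ℝ) (w : Fin n → ℝ) (hw : norm2 w ≤ ε)
    (T : Finset (Fin m)) (xh : Fin m → ℝ)
    (hmod : ModCS A (fun j => (A.mulVec x) j + w j) ε T xh)
    (k : ℕ) (hk : 1 ≤ k)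
    (hΔcard : (spt x \ T).card ≤ 2 * k)
    (hcard1 : (T ∪ (spt x \ T)).card + k ≤ S)
    (hcard2 : 2 * k ≤ S) :
    norm2 (fun i => x i - xh i) ≤ 8.67 * ε := by
  classical
  obtain ⟨hδ0, hδ1, hrip⟩ := hRIP
  have hε0 : 0 ≤ ε := le_trans (norm2_nonneg w) hw
  set hh : Fin m → ℝ := fun i => x i - xh i with hhh
  set Δ : Finset (Fin m) := spt x \ T with hΔ
  set T0 : Finset (Fin m) := T ∪ Δ with hT0
  set C : Finset (Fin m) := T0ᶜ with hC
  set y : Fin n → ℝ := fun j => (A.mulVec x) j + w j with hy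
  -- feasibility: ‖A hh‖ ≤ 2ε
  have hAh : norm2 (A.mulVec hh) ≤ 2 * ε := by
    have e1 : ∀ j, A.mulVec hh j = (y j - A.mulVec xh j) + (-(w j)) := by
      intro j
      have e0 : hh = fun i => x i + (-1) * xh i := by
        funext i; rw [hhh]; ring
      rw [e0, mulVec_comb A x xh (-1) j, hy]
      ring
    have e2 : norm2 (A.mulVec hh)
        = norm2 (fun j => (y j - A.mulVec xh j) + (-(w j))) := by
      congr 1; exact funext e1
    rw [e2]
    calc norm2 (fun j => (y j - A.mulVec xh j) + (-(w j)))
        ≤ norm2 (fun j => y j - A.mulVec xh j) + norm2 (fun j => -(w j)) :=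
          norm2_add_le _ _
    _ ≤ ε + ε := by
        apply add_le_add hmod.1
        have : norm2 (fun j => -(w j)) = norm2 w := by
          rw [norm2, norm2]
          congr 1
          exact Finset.sum_congr rfl (fun j _ => by ring)
        rw [this]; exact hw
    _ = 2 * ε := by ring
  -- cone constraint
  have hcone : ∑ i ∈ C, |hh i| ≤ ∑ i ∈ Δ, |hh i| := by
    have hfeas : norm2 (fun j => y j - (A.mulVec x) j) ≤ ε := by
      have : (fun j => y j - (A.mulVec x) j) = w := by
        funext j; rw [hy]; ring
      rw [this]; exact hw
    have hl1 := hmod.2 x hfeas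
    have hTc : Tᶜ = Δ ∪ C := by
      ext i
      simp only [Finset.mem_compl, Finset.mem_union, hΔ, hC, hT0, Finset.mem_sdiff,
        Finset.mem_union]
      tauto
    have hdisj : Disjoint Δ C := by
      rw [Finset.disjoint_left]
      intro i hi hic
      rw [hC, Finset.mem_compl] at hic
      exact hic (by rw [hT0]; exact Finset.mem_union_right _ hi)
    rw [hTc, Finset.sum_union hdisj, Finset.sum_union hdisj] at hl1
    have hx0 : ∀ i ∈ C, x i = 0 := by
      intro i hi
      rw [hC, Finset.mem_compl, hT0, Finset.mem_union] at hi
      push_neg at hi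
      by_contra hne
      exact hi.2 (by rw [hΔ, Finset.mem_sdiff, mem_spt]; exact ⟨hne, hi.1⟩)
    have e1 : ∑ i ∈ C, |xh i| = ∑ i ∈ C, |hh i| := by
      apply Finset.sum_congr rfl
      intro i hi
      rw [hhh]
      simp only [hx0 i hi, zero_sub, abs_neg]
    have e2 : ∑ i ∈ C, |x i| = 0 := by
      apply Finset.sum_eq_zero
      intro i hi; rw [hx0 i hi, abs_zero]
    have e3 : ∑ i ∈ Δ, |x i| - ∑ i ∈ Δ, |hh i| ≤ ∑ i ∈ Δ, |xh i| := by
      rw [← Finset.sum_sub_distrib]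
      apply Finset.sum_le_sum
      intro i _
      have : x i = xh i + hh i := by rw [hhh]; ring
      calc |x i| - |hh i| ≤ (|xh i| + |hh i|) - |hh i| := by
            apply sub_le_sub_right
            rw [this]; exact abs_add_le _ _
      _ = |xh i| := by ring
    linarith
  -- chunk decomposition of C
  obtain ⟨B, K, hKsubC, hKdisj, hKcard, hcover, htail⟩ := chunk_decomp hh C k hk
  set W : Finset (Fin m) := T0 ∪ K 0 with hW
  set z0 := restr T0 hh with hz0
  set u0 := restr (K 0) hh with hu0
  set zW := restr W hh with hzW
  set uu : ℕ → (Fin m → ℝ) := fun j => restr (K (j+1)) hh with huu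
  set a := norm2 z0 with ha
  set c0 := norm2 u0 with hc0
  set nz := norm2 zW with hnz
  set aΔ := norm2 (restr Δ hh) with haD
  set Tail := ∑ j ∈ Finset.range (B-1), norm2 (uu j) with hTail
  have hT0K0 : Disjoint T0 (K 0) := by
    rw [Finset.disjoint_left]
    intro i hi hik
    have := hKsubC 0 hik
    rw [hC, Finset.mem_compl] at this
    exact this hi
  have hWsq : nz^2 = a^2 + c0^2 := by
    rw [hnz, ha, hc0, hzW, hz0, hu0, hW]
    exact sum_sq_restr_add hT0K0 hh
  have haD_a : aΔ ≤ a := by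
    rw [haD, ha, hz0]
    apply norm2_restr_mono
    rw [hT0]; exact Finset.subset_union_right
  have ha0 : 0 ≤ a := norm2_nonneg _
  have hc00 : 0 ≤ c0 := norm2_nonneg _
  have hnz0 : 0 ≤ nz := norm2_nonneg _
  have haD0 : 0 ≤ aΔ := norm2_nonneg _
  have ha_nz : a ≤ nz := by
    have h : a^2 ≤ nz^2 := by rw [hWsq]; nlinarith only [sq_nonneg c0]
    have h2 := Real.sqrt_le_sqrt h
    rwa [Real.sqrt_sq ha0, Real.sqrt_sq hnz0] at h2
  -- tail bound
  have hsqk : (0:ℝ) < Real.sqrt k :=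
    Real.sqrt_pos.2 (by exact_mod_cast Nat.pos_of_ne_zero (by omega))
  have hTail2 : Tail ≤ Real.sqrt 2 * aΔ := by
    have h1 : Tail * Real.sqrt k ≤ ∑ i ∈ C, |hh i| := htail
    have h2 : ∑ i ∈ Δ, |hh i| ≤ Real.sqrt (Δ.card) * aΔ := l1_le_sqrt_card Δ hh
    have h3 : Real.sqrt (Δ.card) ≤ Real.sqrt (2*(k:ℝ)) := by
      apply Real.sqrt_le_sqrt
      exact_mod_cast hΔcard
    have h4 : Real.sqrt (2*(k:ℝ)) = Real.sqrt 2 * Real.sqrt k :=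
      Real.sqrt_mul (by norm_num) _
    have h5 : Tail * Real.sqrt k ≤ (Real.sqrt 2 * aΔ) * Real.sqrt k := by
      calc Tail * Real.sqrt k ≤ ∑ i ∈ Δ, |hh i| := le_trans h1 hcone
      _ ≤ Real.sqrt (Δ.card) * aΔ := h2
      _ ≤ Real.sqrt (2*(k:ℝ)) * aΔ := mul_le_mul_of_nonneg_right h3 haD0
      _ = (Real.sqrt 2 * aΔ) * Real.sqrt k := by rw [h4]; ring
    exact le_of_mul_le_mul_right h5 hsqk
  have hTail0 : 0 ≤ Tail :=
    Finset.sum_nonneg (fun j _ => norm2_nonneg _)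
  -- pointwise decomposition
  have hdecomp : ∀ i, hh i = zW i + ∑ j ∈ Finset.range (B-1), uu j i := by
    intro i
    by_cases hiW : i ∈ W
    · have h1 : zW i = hh i := by simp [hzW, restr, hiW]
      have h2 : ∀ j ∈ Finset.range (B-1), uu j i = 0 := by
        intro j _
        have hnotin : i ∉ K (j+1) := by
          intro hik
          rw [hW, Finset.mem_union] at hiW
          rcases hiW with h | h
          · have := hKsubC (j+1) hik
            rw [hC, Finset.mem_compl] at this
            exact this h
          · exact (Finset.disjoint_left.1 (hKdisj 0 (j+1) (by omega))) h hik
        simp [huu, restr, hnotin]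
      rw [h1, Finset.sum_congr rfl h2, Finset.sum_const_zero, add_zero]
    · have h1 : zW i = 0 := by simp [hzW, restr, hiW]
      have hiC : i ∈ C := by
        rw [hC, Finset.mem_compl]
        intro hiT0
        exact hiW (by rw [hW]; exact Finset.mem_union_left _ hiT0)
      rw [← hcover, Finset.mem_biUnion] at hiC
      obtain ⟨j0, hj0B, hj0⟩ := hiC
      have hj0ne : j0 ≠ 0 := by
        intro h0
        exact hiW (by rw [hW]; exact Finset.mem_union_right _ (h0 ▸ hj0))
      obtain ⟨j1, rfl⟩ : ∃ j1, j0 = j1 + 1 := ⟨j0 - 1, by omega⟩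
      have hj1 : j1 ∈ Finset.range (B-1) := by
        rw [Finset.mem_range] at hj0B ⊢
        omega
      have h2 : ∑ j ∈ Finset.range (B-1), uu j i = hh i := by
        rw [Finset.sum_eq_single j1]
        · simp [huu, restr, hj0]
        · intro j hj hne
          have hnotin : i ∉ K (j+1) := by
            intro hik
            rcases lt_or_gt_of_ne (fun h : j + 1 = j1 + 1 => hne (by omega)) with hlt | hgt
            · exact (Finset.disjoint_left.1 (hKdisj (j+1) (j1+1) hlt)) hik hj0
            · exact (Finset.disjoint_left.1 (hKdisj (j1+1) (j+1) hgt)) hj0 hik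
          simp [huu, restr, hnotin]
        · intro hn; exact absurd hj1 hn
      rw [h1, h2, zero_add]
  -- mulVec decomposition
  have hmv : ∀ j', A.mulVec hh j'
      = A.mulVec zW j' + ∑ j ∈ Finset.range (B-1), A.mulVec (uu j) j' := by
    intro j'
    rw [mulVec_eq_sum, mulVec_eq_sum]
    have e : ∀ i, A j' i * hh i
        = A j' i * zW i + ∑ j ∈ Finset.range (B-1), A j' i * uu j i := by
      intro i
      rw [hdecomp i, mul_add, Finset.mul_sum]
    rw [Finset.sum_congr rfl (fun i _ => e i), Finset.sum_add_distrib]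
    congr 1
    rw [Finset.sum_comm]
    exact Finset.sum_congr rfl (fun j _ => (mulVec_eq_sum A (uu j) j').symm)
  -- inner product split
  set SAz := ∑ j', (A.mulVec zW) j' ^ 2 with hSAz
  set IP : ℕ → ℝ := fun j => ∑ j', (A.mulVec zW) j' * (A.mulVec (uu j)) j' with hIP
  have hip : ∑ j', (A.mulVec zW) j' * (A.mulVec hh) j'
      = SAz + ∑ j ∈ Finset.range (B-1), IP j := by
    rw [hSAz, hIP]
    have e : ∀ j', (A.mulVec zW) j' * (A.mulVec hh) j'
        = (A.mulVec zW) j' ^ 2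
          + ∑ j ∈ Finset.range (B-1), (A.mulVec zW) j' * (A.mulVec (uu j)) j' := by
      intro j'
      rw [hmv j', mul_add, Finset.mul_sum]
      ring_nf
    rw [Finset.sum_congr rfl (fun j' _ => e j'), Finset.sum_add_distrib]
    congr 1
    exact Finset.sum_comm
  -- zW = z0 + u0
  have hzw_split : zW = fun i => z0 i + 1 * u0 i := by
    funext i
    by_cases hi : i ∈ T0
    · have hik : i ∉ K 0 := Finset.disjoint_left.1 hT0K0 hi
      have hiw : i ∈ W := by rw [hW]; exact Finset.mem_union_left _ hi
      simp [hzW, hz0, hu0, restr, hi, hik, hiw]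
    · by_cases hik : i ∈ K 0
      · have hiw : i ∈ W := by rw [hW]; exact Finset.mem_union_right _ hik
        simp [hzW, hz0, hu0, restr, hi, hik, hiw]
      · have hiw : i ∉ W := by
          rw [hW, Finset.mem_union]; tauto
        simp [hzW, hz0, hu0, restr, hi, hik, hiw]
  -- support card bounds
  have hsptz0 : (spt z0).card ≤ T0.card := by
    apply Finset.card_le_card
    rw [hz0]; exact spt_restr_subset _ _
  have hsptu0 : (spt u0).card ≤ k := by
    calc (spt u0).card ≤ (K 0).card := by
          apply Finset.card_le_card
          rw [hu0]; exact spt_restr_subset _ _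
    _ ≤ k := hKcard 0
  have hsptuu : ∀ j, (spt (uu j)).card ≤ k := by
    intro j
    calc (spt (uu j)).card ≤ (K (j+1)).card := by
          apply Finset.card_le_card
          simp only [huu]; exact spt_restr_subset _ _
    _ ≤ k := hKcard (j+1)
  -- theta bounds for each tail block
  have hIPbound : ∀ j, |IP j| ≤ δ * (a + c0) * norm2 (uu j) := by
    intro j
    have hsplit : IP j = (∑ j', (A.mulVec z0) j' * (A.mulVec (uu j)) j')
        + (∑ j', (A.mulVec u0) j' * (A.mulVec (uu j)) j') := by
      rw [hIP]
      simp only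
      rw [← Finset.sum_add_distrib]
      apply Finset.sum_congr rfl
      intro j' _
      rw [hzw_split, mulVec_comb A z0 u0 1 j']
      ring
    have ht1 : |∑ j', (A.mulVec z0) j' * (A.mulVec (uu j)) j'|
        ≤ δ * a * norm2 (uu j) := by
      have hd : ∀ i, z0 i = 0 ∨ uu j i = 0 := by
        intro i
        by_cases hi : i ∈ T0
        · right
          have : i ∉ K (j+1) := by
            intro hik
            have := hKsubC (j+1) hik
            rw [hC, Finset.mem_compl] at this
            exact this hi
          simp [huu, restr, this]
        · left; simp [hz0, restr, hi]
      have hcc : (spt z0).card + (spt (uu j)).card ≤ S := by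
        have := hsptuu j
        omega
      have := theta_bound ⟨hδ0, hδ1, hrip⟩ z0 (uu j) hd hcc
      rw [← ha] at this
      exact this
    have ht2 : |∑ j', (A.mulVec u0) j' * (A.mulVec (uu j)) j'|
        ≤ δ * c0 * norm2 (uu j) := by
      have hd : ∀ i, u0 i = 0 ∨ uu j i = 0 := by
        intro i
        by_cases hi : i ∈ K 0
        · right
          have : i ∉ K (j+1) :=
            fun hik => (Finset.disjoint_left.1 (hKdisj 0 (j+1) (by omega))) hi hik
          simp [huu, restr, this]
        · left; simp [hu0, restr, hi]
      have hcc : (spt u0).card + (spt (uu j)).card ≤ S := by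
        have := hsptuu j
        omega
      have := theta_bound ⟨hδ0, hδ1, hrip⟩ u0 (uu j) hd hcc
      rw [← hc0] at this
      exact this
    calc |IP j| ≤ |∑ j', (A.mulVec z0) j' * (A.mulVec (uu j)) j'|
        + |∑ j', (A.mulVec u0) j' * (A.mulVec (uu j)) j'| := by
          rw [hsplit]; exact abs_add_le _ _
    _ ≤ δ * a * norm2 (uu j) + δ * c0 * norm2 (uu j) := add_le_add ht1 ht2
    _ = δ * (a + c0) * norm2 (uu j) := by ring
  -- RIP on zW
  have hsptzW : (spt zW).card ≤ S := by
    calc (spt zW).card ≤ W.card := by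
          apply Finset.card_le_card
          rw [hzW]; exact spt_restr_subset _ _
    _ ≤ T0.card + (K 0).card := by rw [hW]; exact Finset.card_union_le _ _
    _ ≤ S := by have := hKcard 0; omega
  have hripzW := hrip zW hsptzW
  have hzWsum : ∑ i, zW i ^ 2 = nz ^ 2 := (sq_norm2 zW).symm
  set sq1 := Real.sqrt (1 + δ) with hsq1
  have hsq10 : 0 ≤ sq1 := Real.sqrt_nonneg _
  have hsq1sq : sq1 ^ 2 = 1 + δ := Real.sq_sqrt (by linarith)
  have hAzW : norm2 (A.mulVec zW) ≤ sq1 * nz := by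
    apply norm2_le_of_sq_le _ (by positivity)
    calc ∑ j', (A.mulVec zW) j' ^ 2 ≤ (1 + δ) * ∑ i, zW i ^ 2 := hripzW.2
    _ = (1+δ) * nz^2 := by rw [hzWsum]
    _ = (sq1 * nz)^2 := by rw [mul_pow, hsq1sq]
  have hinner1 : ∑ j', (A.mulVec zW) j' * (A.mulVec hh) j' ≤ sq1 * nz * (2*ε) := by
    calc ∑ j', (A.mulVec zW) j' * (A.mulVec hh) j'
        ≤ |∑ j', (A.mulVec zW) j' * (A.mulVec hh) j'| := le_abs_self _
    _ ≤ norm2 (A.mulVec zW) * norm2 (A.mulVec hh) := abs_inner_le _ _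
    _ ≤ (sq1 * nz) * (2*ε) := by
          apply mul_le_mul hAzW hAh (norm2_nonneg _)
          positivity
  -- main quadratic inequality
  set s2 := Real.sqrt 2 with hs2
  have hs20 : 0 ≤ s2 := Real.sqrt_nonneg _
  have hs2sq : s2 ^ 2 = 2 := Real.sq_sqrt (by norm_num)
  have hs2b : s2 ≤ 1.41422 := by
    rw [hs2]
    exact sqrt_le_num (by norm_num) (by norm_num)
  have hquad : (1 - δ) * nz^2 ≤ sq1 * nz * (2*ε) + δ * (a + c0) * (s2 * aΔ) := by
    have hlow : (1 - δ) * nz^2 ≤ SAz := by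
      rw [← hzWsum]; exact hripzW.1
    have hIPsum : ∑ j ∈ Finset.range (B-1), IP j
        ≥ -(δ * (a + c0) * (s2 * aΔ)) := by
      have h1 : ∀ j ∈ Finset.range (B-1), -(δ * (a + c0) * norm2 (uu j)) ≤ IP j := by
        intro j _
        have := (abs_le.1 (hIPbound j)).1
        linarith
      have h2 : ∑ j ∈ Finset.range (B-1), -(δ * (a + c0) * norm2 (uu j))
          ≤ ∑ j ∈ Finset.range (B-1), IP j := Finset.sum_le_sum h1
      have h3 : ∑ j ∈ Finset.range (B-1), -(δ * (a + c0) * norm2 (uu j))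
          = -(δ * (a + c0) * Tail) := by
        rw [hTail, Finset.mul_sum, ← Finset.sum_neg_distrib]
      have h4 : δ * (a + c0) * Tail ≤ δ * (a + c0) * (s2 * aΔ) := by
        apply mul_le_mul_of_nonneg_left _ (by positivity)
        rw [hs2]; exact hTail2
      linarith
    have : SAz = (∑ j', (A.mulVec zW) j' * (A.mulVec hh) j')
        - ∑ j ∈ Finset.range (B-1), IP j := by
      rw [hip]; ring
    rw [this] at hlow
    linarith
  -- quadratic to linear bound
  have hs2b : s2 ≤ 1.41422 := by
    rw [hs2]
    exact sqrt_le_num (by norm_num) (by norm_num)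
  have hd2 : (0.43931 : ℝ) ≤ 1 - 2.70718 * δ := by
    have h1 : (2.70718:ℝ) * δ ≤ 2.70718 * 0.20711 := by linarith
    linarith
  have hkey : nz * (1 - 2.70718 * δ) ≤ 2 * sq1 * ε := by
    have hgeom : s2 * (a + c0) * aΔ ≤ 1.70718 * nz^2 := by
      have h1 : s2 * (a + c0) * aΔ ≤ s2 * ((a + c0) * a) := by
        have := mul_le_mul_of_nonneg_left haD_a (by positivity : (0:ℝ) ≤ s2 * (a + c0))
        calc s2 * (a + c0) * aΔ = s2 * (a + c0) * aΔ := rfl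
        _ ≤ s2 * (a + c0) * a := by
              exact mul_le_mul_of_nonneg_left haD_a (by positivity)
        _ = s2 * ((a + c0) * a) := by ring
      have h2 : s2 * ((a + c0) * a) ≤ 1.41422 * ((a + c0) * a) :=
        mul_le_mul_of_nonneg_right hs2b (by positivity)
      have h3 : (1.41422:ℝ) * ((a + c0) * a) ≤ 1.70718 * (a^2 + c0^2) := by
        nlinarith only [sq_nonneg (c0 - 0.4142 * a), sq_nonneg a, sq_nonneg c0]
      rw [hWsq]
      linarith
    have h5 : (1 - δ) * nz^2 ≤ 2 * sq1 * ε * nz + δ * (1.70718 * nz^2) := by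
      have : δ * (a + c0) * (s2 * aΔ) ≤ δ * (1.70718 * nz^2) := by
        calc δ * (a + c0) * (s2 * aΔ) = δ * (s2 * (a + c0) * aΔ) := by ring
        _ ≤ δ * (1.70718 * nz^2) := mul_le_mul_of_nonneg_left hgeom hδ0
      calc (1 - δ) * nz^2 ≤ sq1 * nz * (2*ε) + δ * (a + c0) * (s2 * aΔ) := hquad
      _ ≤ 2 * sq1 * ε * nz + δ * (1.70718 * nz^2) := by linarith
    rcases eq_or_lt_of_le hnz0 with hz | hz
    · rw [← hz, zero_mul]
      positivity
    · have h6 : nz * (1 - 2.70718 * δ) * nz ≤ (2 * sq1 * ε) * nz := by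
        have e : nz * (1 - 2.70718 * δ) * nz
            = (1-δ) * nz^2 - δ * (1.70718 * nz^2) := by ring
        rw [e]
        linarith only [h5]
      exact le_of_mul_le_mul_right h6 hz
  -- final norm bound
  have hWc_sub : Wᶜ ⊆ (Finset.range (B-1)).biUnion (fun j => K (j+1)) := by
    intro i hi
    rw [Finset.mem_compl, hW, Finset.mem_union] at hi
    push_neg at hi
    have hiC : i ∈ C := by rw [hC, Finset.mem_compl]; exact hi.1
    rw [← hcover, Finset.mem_biUnion] at hiC
    obtain ⟨j0, hj0B, hj0⟩ := hiC
    have hj0ne : j0 ≠ 0 := fun h0 => hi.2 (h0 ▸ hj0)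
    obtain ⟨j1, rfl⟩ : ∃ j1, j0 = j1 + 1 := ⟨j0 - 1, by omega⟩
    rw [Finset.mem_biUnion]
    refine ⟨j1, ?_, hj0⟩
    rw [Finset.mem_range] at hj0B ⊢
    omega
  have hhsq : ∑ i, hh i ^ 2 ≤ 3 * nz^2 := by
    have e1 : ∀ i, hh i ^ 2 = zW i ^ 2 + restr Wᶜ hh i ^ 2 := by
      intro i
      by_cases hi : i ∈ W
      · have : i ∉ Wᶜ := by simp [hi]
        simp [hzW, restr, hi, this]
      · have : i ∈ Wᶜ := by simp [hi]
        simp [hzW, restr, hi, this]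
    have e2 : ∑ i, hh i ^ 2 = nz^2 + ∑ i ∈ Wᶜ, hh i ^ 2 := by
      rw [hnz, sq_norm2, ← restr_sumsq Wᶜ hh, ← Finset.sum_add_distrib]
      exact Finset.sum_congr rfl (fun i _ => e1 i)
    have e3 : ∑ i ∈ Wᶜ, hh i ^ 2 ≤ 2 * nz^2 := by
      have h1 : ∑ i ∈ Wᶜ, hh i ^ 2
          ≤ ∑ i ∈ (Finset.range (B-1)).biUnion (fun j => K (j+1)), hh i ^ 2 :=
        Finset.sum_le_sum_of_subset_of_nonneg hWc_sub (fun i _ _ => sq_nonneg _)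
      have h2 : ∑ i ∈ (Finset.range (B-1)).biUnion (fun j => K (j+1)), hh i ^ 2
          = ∑ j ∈ Finset.range (B-1), ∑ i ∈ K (j+1), hh i ^ 2 := by
        rw [Finset.sum_biUnion]
        intro p hp q hq hpq
        rcases lt_or_gt_of_ne hpq with hlt | hgt
        · exact hKdisj (p+1) (q+1) (by omega)
        · exact (hKdisj (q+1) (p+1) (by omega)).symm
      have h3 : ∀ j, ∑ i ∈ K (j+1), hh i ^ 2 = norm2 (uu j) ^ 2 := by
        intro j
        rw [sq_norm2]
        simp only [huu]
        rw [restr_sumsq]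
      have h4 : ∑ j ∈ Finset.range (B-1), norm2 (uu j) ^ 2 ≤ Tail ^ 2 := by
        rw [hTail]
        exact Finset.sum_sq_le_sq_sum_of_nonneg (fun j _ => norm2_nonneg _)
      have h5 : Tail^2 ≤ 2 * aΔ^2 := by
        have hm := mul_self_le_mul_self hTail0 hTail2
        calc Tail^2 = Tail * Tail := sq Tail
        _ ≤ (s2 * aΔ) * (s2 * aΔ) := hm
        _ = s2^2 * aΔ^2 := by ring
        _ = 2 * aΔ^2 := by rw [hs2sq]
      have h6 : aΔ ≤ nz := le_trans haD_a ha_nz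
      calc ∑ i ∈ Wᶜ, hh i ^ 2
          ≤ ∑ j ∈ Finset.range (B-1), ∑ i ∈ K (j+1), hh i ^ 2 := by rw [← h2]; exact h1
      _ = ∑ j ∈ Finset.range (B-1), norm2 (uu j) ^ 2 :=
          Finset.sum_congr rfl (fun j _ => h3 j)
      _ ≤ Tail ^ 2 := h4
      _ ≤ 2 * aΔ^2 := h5
      _ ≤ 2 * nz^2 := by nlinarith only [mul_self_le_mul_self haD0 h6]
    linarith
  set s3 := Real.sqrt 3 with hs3
  have hs30 : 0 ≤ s3 := Real.sqrt_nonneg _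
  have hs3sq : s3 ^ 2 = 3 := Real.sq_sqrt (by norm_num)
  have hfinal : norm2 hh ≤ s3 * nz := by
    apply norm2_le_of_sq_le _ (by positivity)
    calc ∑ i, hh i ^ 2 ≤ 3 * nz^2 := hhsq
    _ = (s3 * nz)^2 := by rw [mul_pow, hs3sq]
  -- numerics
  have hsq1b : sq1 ≤ 1.0988 := by
    rw [hsq1]
    exact sqrt_le_num (by norm_num; linarith) (by norm_num)
  have hs3b : s3 ≤ 1.73206 := by
    rw [hs3]
    exact sqrt_le_num (by norm_num) (by norm_num)
  have hnzb : nz * 0.43931 ≤ 2.1976 * ε := by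
    calc nz * 0.43931 ≤ nz * (1 - 2.70718 * δ) :=
          mul_le_mul_of_nonneg_left hd2 hnz0
    _ ≤ 2 * sq1 * ε := hkey
    _ ≤ 2.1976 * ε := by
          have h1 : 2 * sq1 ≤ 2.1976 := by linarith
          exact mul_le_mul_of_nonneg_right h1 hε0
  have hnzb2 : nz ≤ 5.003 * ε := by linarith
  calc norm2 hh ≤ s3 * nz := hfinal
  _ ≤ 1.73206 * nz := mul_le_mul_of_nonneg_right hs3b hnz0
  _ ≤ 1.73206 * (5.003 * ε) := by linarith
  _ ≤ 8.67 * ε := by linarith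

set_option maxHeartbeats 1000000 in
/-- stability of modified-CS (Theorem 1). -/
theorem modCS_stability {n m S0 Sa d : ℕ} (r ε δ α : ℝ)
    (sm : SigModel m S0 Sa d r)
    (A : Matrix (Fin n) (Fin m) ℝ) (w : ℕ → Fin n → ℝ)
    (hw : ∀ t : ℕ, 0 < t → norm2 (w t) ≤ ε)
    (Nhat : ℕ → Finset (Fin m)) (xhat : ℕ → Fin m → ℝ)
    -- the modified-CS algorithm with threshold `α`:
    (halg : ∀ t : ℕ, 0 < t →
      ModCS A (fun j => (A.mulVec (sm.x t)) j + w t j) ε (Nhat (t - 1)) (xhat t))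
    (hest : ∀ t : ℕ, 0 < t →
      Nhat t = Finset.univ.filter (fun i => α < |xhat t i|))
    -- support estimation threshold:
    (hα : α = 8.79 * ε)
    -- (a) measurement model:
    (hδ : δ < (Real.sqrt 2 - 1) / 2)
    (hRIP : RIPBound A (S0 + 3 * Sa) δ)
    -- (b) new element increase rate:
    (hrate : r ≥ 8.79 * ε)
    -- (c) initial support estimate:
    (hinit : Nhat 0 ⊆ spt (sm.x 0) ∧ (Nhat 0).card ≤ S0 ∧
      spt (sm.x 0) \ Nhat 0 ⊆ Ssmall sm.x r 0 2) :
    (∀ t : ℕ,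
      Nhat t ⊆ spt (sm.x t) ∧ (Nhat t).card ≤ S0 ∧
      spt (sm.x t) \ Nhat t ⊆ Ssmall sm.x r t 2 ∧
      (spt (sm.x t) \ Nhat t).card ≤ 2 * Sa) ∧
    (∀ t : ℕ, 0 < t →
      (Nhat (t - 1)).card ≤ S0 ∧
      (Nhat (t - 1) \ spt (sm.x t)).card ≤ Sa ∧
      (spt (sm.x t) \ Nhat (t - 1)).card ≤ 2 * Sa ∧
      norm2 (fun i => sm.x t i - xhat t i) ≤ 8.79 * ε) := by
  classical
  have hε0 : 0 ≤ ε := le_trans (norm2_nonneg (w 1)) (hw 1 one_pos)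
  have hδup : δ ≤ 0.20711 := by
    have h2 : Real.sqrt 2 ≤ 1.41422 := sqrt_le_num (by norm_num) (by norm_num)
    have : (Real.sqrt 2 - 1)/2 ≤ 0.20711 := by linarith
    linarith
  -- cardinality of Ssmall at level 2
  have hsmall2 : ∀ t, (Ssmall sm.x r t 2).card = 2 * Sa := by
    intro t
    have := sm.small_card t 2 (by norm_num) sm.hd
    simpa using this
  -- the inductive step
  have hstep : ∀ t : ℕ,
      (Nhat t ⊆ spt (sm.x t) ∧ (Nhat t).card ≤ S0 ∧
        spt (sm.x t) \ Nhat t ⊆ Ssmall sm.x r t 2) →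
      ((Nhat t \ spt (sm.x (t+1))).card ≤ Sa ∧
       (spt (sm.x (t+1)) \ Nhat t).card ≤ 2 * Sa ∧
       norm2 (fun i => sm.x (t+1) i - xhat (t+1) i) ≤ 8.67 * ε ∧
       (Nhat (t+1) ⊆ spt (sm.x (t+1)) ∧ (Nhat (t+1)).card ≤ S0 ∧
        spt (sm.x (t+1)) \ Nhat (t+1) ⊆ Ssmall sm.x r (t+1) 2)) := by
    intro t ih
    obtain ⟨ihsub, ihcard, ihsmall⟩ := ih
    have ht1 : 0 < t + 1 := Nat.succ_pos t
    have hss := sm.supp_step (t+1) ht1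
    rw [Nat.add_sub_cancel] at hss
    -- (a) deleted part
    have hΔe_sub : Nhat t \ spt (sm.x (t+1)) ⊆ sm.rem (t+1) := by
      intro i hi
      rw [Finset.mem_sdiff] at hi
      by_contra hirem
      apply hi.2
      rw [hss, Finset.mem_sdiff]
      exact ⟨Finset.mem_union_left _ (ihsub hi.1), hirem⟩
    have hΔe : (Nhat t \ spt (sm.x (t+1))).card ≤ Sa := by
      calc (Nhat t \ spt (sm.x (t+1))).card ≤ (sm.rem (t+1)).card :=
            Finset.card_le_card hΔe_sub
      _ = Sa := sm.rem_card (t+1) ht1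
    -- (b) new part
    have hrem_small : sm.rem (t+1) ⊆ Ssmall sm.x r t 2 := by
      intro i hi
      have := sm.rem_old (t+1) ht1 i hi
      rw [Nat.add_sub_cancel] at this
      rw [Ssmall, Finset.mem_filter]
      refine ⟨Finset.mem_univ i, ?_, ?_⟩
      · rw [this]; exact sm.hr
      · push_cast
        rw [this]
        linarith [sm.hr]
    have hΔ_sub : spt (sm.x (t+1)) \ Nhat t
        ⊆ sm.add (t+1) ∪ (Ssmall sm.x r t 2 \ sm.rem (t+1)) := by
      intro i hi
      rw [Finset.mem_sdiff] at hi
      have hicur := hi.1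
      rw [hss, Finset.mem_sdiff, Finset.mem_union] at hicur
      rw [Finset.mem_union]
      rcases hicur.1 with hprev | hadd
      · right
        rw [Finset.mem_sdiff]
        refine ⟨ihsmall ?_, hicur.2⟩
        rw [Finset.mem_sdiff]
        exact ⟨hprev, hi.2⟩
      · left; exact hadd
    have hΔ : (spt (sm.x (t+1)) \ Nhat t).card ≤ 2 * Sa := by
      have h1 : (Ssmall sm.x r t 2 \ sm.rem (t+1)).card = Sa := by
        rw [Finset.card_sdiff_of_subset hrem_small, hsmall2 t, sm.rem_card (t+1) ht1]
        omega
      calc (spt (sm.x (t+1)) \ Nhat t).card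
          ≤ (sm.add (t+1) ∪ (Ssmall sm.x r t 2 \ sm.rem (t+1))).card :=
            Finset.card_le_card hΔ_sub
      _ ≤ (sm.add (t+1)).card + (Ssmall sm.x r t 2 \ sm.rem (t+1)).card :=
            Finset.card_union_le _ _
      _ ≤ 2 * Sa := by rw [sm.add_card (t+1) ht1, h1]; omega
    -- (c) error bound via modCS_error
    have hsdiff_eq : spt (sm.x (t+1)) \ Nhat t = spt (sm.x (t+1)) \ Nhat t := rfl
    have hTcup : (Nhat t ∪ (spt (sm.x (t+1)) \ Nhat t)).card + Sa ≤ S0 + 3 * Sa := by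
      have h1 : (Nhat t ∪ (spt (sm.x (t+1)) \ Nhat t)).card
          ≤ (Nhat t).card + (spt (sm.x (t+1)) \ Nhat t).card :=
        Finset.card_union_le _ _
      omega
    have halg1 := halg (t+1) ht1
    rw [Nat.add_sub_cancel] at halg1
    have herr : norm2 (fun i => sm.x (t+1) i - xhat (t+1) i) ≤ 8.67 * ε := by
      apply modCS_error hRIP hδup (sm.x (t+1)) (w (t+1)) (hw (t+1) ht1)
        (Nhat t) (xhat (t+1)) halg1 Sa sm.hSa hΔ hTcup
      have := sm.hS0
      omega
    -- (d) new support estimate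
    have hest1 := hest (t+1) ht1
    have hcoord : ∀ i, |sm.x (t+1) i - xhat (t+1) i| ≤ 8.67 * ε := by
      intro i
      exact le_trans (coord_le_norm2 (fun i => sm.x (t+1) i - xhat (t+1) i) i) herr
    have hnew_sub : Nhat (t+1) ⊆ spt (sm.x (t+1)) := by
      intro i hi
      rw [hest1, Finset.mem_filter] at hi
      rw [mem_spt]
      by_contra hx0
      have h1 : |xhat (t+1) i| ≤ 8.67 * ε := by
        have := hcoord i
        rw [hx0, zero_sub, abs_neg] at this
        exact this
      have : α < |xhat (t+1) i| := hi.2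
      rw [hα] at this
      linarith
    have hnew_card : (Nhat (t+1)).card ≤ S0 := by
      calc (Nhat (t+1)).card ≤ (spt (sm.x (t+1))).card :=
            Finset.card_le_card hnew_sub
      _ = S0 := sm.supp_card (t+1)
    have hnew_small : spt (sm.x (t+1)) \ Nhat (t+1) ⊆ Ssmall sm.x r (t+1) 2 := by
      intro i hi
      rw [Finset.mem_sdiff, mem_spt] at hi
      rw [Ssmall, Finset.mem_filter]
      refine ⟨Finset.mem_univ i, abs_pos.2 hi.1, ?_⟩
      push_cast
      by_contra hge
      push_neg at hge
      apply hi.2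
      rw [hest1, Finset.mem_filter]
      refine ⟨Finset.mem_univ i, ?_⟩
      have h1 : |sm.x (t+1) i| - |xhat (t+1) i| ≤ |sm.x (t+1) i - xhat (t+1) i| :=
        abs_sub_abs_le_abs_sub _ _
      have h2 : |sm.x (t+1) i - xhat (t+1) i| ≤ 8.67 * ε := hcoord i
      rcases eq_or_lt_of_le hε0 with heq | hlt
      · rw [hα, ← heq]
        rw [← heq] at h2
        have hr2 : (0:ℝ) < r := sm.hr
        linarith
      · rw [hα]
        linarith
    exact ⟨hΔe, hΔ, herr, hnew_sub, hnew_card, hnew_small⟩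
  -- induction
  have key : ∀ t : ℕ, Nhat t ⊆ spt (sm.x t) ∧ (Nhat t).card ≤ S0 ∧
      spt (sm.x t) \ Nhat t ⊆ Ssmall sm.x r t 2 := by
    intro t
    induction t with
    | zero => exact hinit
    | succ t ih => exact (hstep t ih).2.2.2
  constructor
  · intro t
    obtain ⟨h1, h2, h3⟩ := key t
    refine ⟨h1, h2, h3, ?_⟩
    calc (spt (sm.x t) \ Nhat t).card ≤ (Ssmall sm.x r t 2).card :=
          Finset.card_le_card h3
    _ = 2 * Sa := hsmall2 t
  · intro t ht
    obtain ⟨t', rfl⟩ : ∃ t', t = t' + 1 := ⟨t - 1, by omega⟩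
    rw [Nat.add_sub_cancel]
    obtain ⟨h1, h2, h3, _⟩ := hstep t' (key t')
    exact ⟨(key t').2.1, h1, h2, by linarith⟩
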